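/- arXiv:0907.5561 — 3 statements merged into one kernel-verified Lean document; each statement's English description precedes it below -/
import Mathlib

section
/- For any positive integers d and h, the sum of max(h-|a|,0) over all integers a with a ≡ 0 (mod d) equals h²/d + d·{h/d}·(1-{h/d}), where {x} denotes the fractional part of x. -/
open Finset

lemma sum_abs_Icc_real (q : ℕ) :
    ∑ k ∈ Finset.Icc (-(q : ℤ)) (q : ℤ), |(k : ℝ)| = q * (q + 1) := by
  induction q with
  | zero => simp
  | succ n ih =>
    have h1 : Finset.Icc (-((n + 1 : ℕ) : ℤ)) ((n + 1 : ℕ) : ℤ)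
        = insert (-((n : ℤ) + 1)) (insert ((n : ℤ) + 1) (Finset.Icc (-(n : ℤ)) (n : ℤ))) := by
      ext x; simp [Finset.mem_Icc]; omega
    have h2 : ((n : ℤ) + 1) ∉ Finset.Icc (-(n : ℤ)) (n : ℤ) := by
      simp [Finset.mem_Icc]
    have h3 : (-((n : ℤ) + 1)) ∉ insert ((n : ℤ) + 1) (Finset.Icc (-(n : ℤ)) (n : ℤ)) := by
      simp [Finset.mem_Icc]; omega
    rw [h1, Finset.sum_insert h3, Finset.sum_insert h2, ih]
    push_cast
    rw [abs_neg, abs_of_nonneg (by positivity : (0:ℝ) ≤ (n : ℝ) + 1)]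
    ring

/-- For positive integers `d` and `h`, the sum of `max (h - |a|) 0` over all
integers `a ≡ 0 (mod d)` equals `h²/d + d·{h/d}·(1 - {h/d})`.  Only `a` with `|a| ≤ h`
contribute, so the sum over all integers is the sum over `a ∈ [-h, h]`. -/
theorem fejer_sum_over_multiples (d h : ℕ) (hd : 0 < d) (hh : 0 < h) :
    (∑ a ∈ Finset.Icc (-(h : ℤ)) (h : ℤ),
        if (d : ℤ) ∣ a then max ((h : ℝ) - |(a : ℝ)|) 0 else 0)
      = (h : ℝ) ^ 2 / d
        + d * Int.fract ((h : ℝ) / d) * (1 - Int.fract ((h : ℝ) / d)) := by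
  set q : ℕ := h / d with hq
  set r : ℕ := h % d with hr
  have hrd : r < d := Nat.mod_lt _ hd
  have hqr : h = d * q + r := by rw [hq, hr]; exact (Nat.div_add_mod h d).symm
  have hdz : (d : ℤ) ≠ 0 := by exact_mod_cast hd.ne'
  have hdR : (0 : ℝ) < d := by exact_mod_cast hd
  -- key reindexing
  have key : (∑ a ∈ Finset.Icc (-(h : ℤ)) (h : ℤ),
        if (d : ℤ) ∣ a then max ((h : ℝ) - |(a : ℝ)|) 0 else 0)
      = ∑ k ∈ Finset.Icc (-(q : ℤ)) (q : ℤ), ((h : ℝ) - d * |(k : ℝ)|) := by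
    rw [← Finset.sum_filter]
    apply Finset.sum_nbij' (i := fun a => a / (d : ℤ)) (j := fun k => (d : ℤ) * k)
    · intro a ha
      simp only [Finset.mem_filter, Finset.mem_Icc] at ha
      obtain ⟨⟨h1, h2⟩, k, hk⟩ := ha
      subst hk
      rw [Int.mul_ediv_cancel_left _ hdz]
      simp only [Finset.mem_Icc]
      constructor <;> nlinarith [hrd, hqr, hd]
    · intro k hk
      simp only [Finset.mem_Icc] at hk
      simp only [Finset.mem_filter, Finset.mem_Icc]
      refine ⟨⟨?_, ?_⟩, Dvd.intro _ rfl⟩ <;> nlinarith [hrd, hqr, hd, hk.1, hk.2]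
    · intro a ha
      simp only [Finset.mem_filter] at ha
      obtain ⟨-, k, hk⟩ := ha
      subst hk
      rw [Int.mul_ediv_cancel_left _ hdz]
    · intro k hk
      rw [Int.mul_ediv_cancel_left _ hdz]
    · intro a ha
      simp only [Finset.mem_filter, Finset.mem_Icc] at ha
      obtain ⟨⟨h1, h2⟩, k, hk⟩ := ha
      subst hk
      rw [Int.mul_ediv_cancel_left _ hdz]
      rw [max_eq_left]
      · push_cast
        rw [abs_mul, abs_of_nonneg hdR.le]
      · have : |(d : ℤ) * k| ≤ (h : ℤ) := abs_le.2 ⟨h1, h2⟩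
        have : |((d : ℤ) * k : ℤ)| ≤ (h : ℝ) := by exact_mod_cast this
        rw [Int.cast_abs] at this
        push_cast at this ⊢
        linarith
  rw [key]
  have hcard : (Finset.Icc (-(q : ℤ)) (q : ℤ)).card = 2 * q + 1 := by
    rw [Int.card_Icc]; omega
  rw [Finset.sum_sub_distrib, Finset.sum_const, hcard, ← Finset.mul_sum,
    sum_abs_Icc_real]
  -- compute the fractional part
  have hfract : Int.fract ((h : ℝ) / d) = (r : ℝ) / d := by
    have : (h : ℝ) / d = (q : ℤ) + (r : ℝ) / d := by
      rw [hqr]; push_cast; field_simp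
    rw [this, Int.fract_intCast_add, Int.fract_eq_self.2]
    constructor
    · positivity
    · rw [div_lt_one hdR]; exact_mod_cast hrd
  rw [hfract]
  have hH : (h : ℝ) = d * q + r := by exact_mod_cast hqr
  field_simp
  rw [hH]
  ring
end

section
/- For any positive integers q and h, the sum over all integers a of max(h-|a|,0)·c_q(a) equals [q=1]·h² + Σ_{d|q} d²·μ(q/d)·{h/d}·(1-{h/d}), where c_q(a) is the Ramanujan sum, μ is the Möbius function, and [q=1] is 1 if q=1 and 0 otherwise. -/
/-!
Möbius inversion over `gcd(j, q)` together with the orthogonality of the `n`-th roots of unity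
gives `c_q(a) = ∑_{d ∣ q, d ∣ a} d μ(q/d)`. Exchanging the sums, the `d`-term is `d μ(q/d)` times
the sum of the tent `max(h - |a|, 0)` over the multiples `a = d m` of `d`; writing `h = d M + r`
with `0 ≤ r < d`, that sum is `(2M + 1) h - d M (M + 1) = h²/d + r (1 - r/d)`. Finally
`∑_{d ∣ q} μ(q/d) = [q = 1]`.
-/

open Finset

/-- The Ramanujan sum `c_q(a) = Σ_{j mod q, gcd(j,q)=1} e^{2πija/q}`. -/
noncomputable def ramanujanSum (q : ℕ) (a : ℤ) : ℂ :=
  ∑ j ∈ (Finset.range q).filter (fun j => Nat.Coprime j q),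
    Complex.exp (2 * Real.pi * Complex.I * (j : ℂ) * (a : ℂ) / (q : ℂ))

open Complex Real ArithmeticFunction
open scoped ArithmeticFunction.Moebius

theorem Finset.sum_range_filter_dvd {M : Type*} [AddCommMonoid M] {d q : ℕ} (hdq : d ∣ q)
    (f : ℕ → M) :
    ∑ j ∈ range q with d ∣ j, f j = ∑ k ∈ range (q / d), f (d * k) := by
  obtain ⟨m, rfl⟩ := hdq
  rcases Nat.eq_zero_or_pos d with rfl | hd
  · simp
  have hmap :
      {j ∈ range (d * m) | d ∣ j} = (range m).map ⟨(d * ·), mul_right_injective₀ hd.ne'⟩ := by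
    ext j
    simp only [mem_filter, mem_range, mem_map, Function.Embedding.coeFn_mk]
    constructor
    · rintro ⟨hj, k, rfl⟩
      exact ⟨k, Nat.lt_of_mul_lt_mul_left hj, rfl⟩
    · rintro ⟨k, hk, rfl⟩
      exact ⟨Nat.mul_lt_mul_of_pos_left hk hd, dvd_mul_right d k⟩
  rw [hmap, sum_map, Nat.mul_div_cancel_left m hd]
  rfl

theorem sum_divisors_moebius (n : ℕ) : ∑ d ∈ n.divisors, μ d = if n = 1 then 1 else 0 := by
  rw [← coe_mul_zeta_apply, moebius_mul_coe_zeta, one_apply]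

theorem sum_moebius_divisors_filter_dvd {q : ℕ} (hq : q ≠ 0) (j : ℕ) :
    ∑ d ∈ q.divisors with d ∣ j, μ d = if j.Coprime q then 1 else 0 := by
  have hfilter : {d ∈ q.divisors | d ∣ j} = (j.gcd q).divisors := by
    rw [← Nat.divisors_filter_dvd_of_dvd hq (Nat.gcd_dvd_right j q)]
    refine filter_congr fun d hd => ?_
    rw [Nat.dvd_gcd_iff, and_iff_left (Nat.dvd_of_mem_divisors hd)]
  rw [hfilter, sum_divisors_moebius]

theorem sum_filter_coprime_eq_sum_moebius_smul {M : Type*} [AddCommGroup M] (q : ℕ)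
    (f : ℕ → M) :
    ∑ j ∈ range q with j.Coprime q, f j
      = ∑ d ∈ q.divisors, μ d • ∑ k ∈ range (q / d), f (d * k) := by
  rcases eq_or_ne q 0 with rfl | hq
  · simp
  calc ∑ j ∈ range q with j.Coprime q, f j
      = ∑ j ∈ range q, (∑ d ∈ q.divisors with d ∣ j, μ d) • f j := by
        simp_rw [sum_moebius_divisors_filter_dvd hq, ite_smul, one_smul, zero_smul, sum_filter]
    _ = ∑ d ∈ q.divisors, μ d • ∑ j ∈ range q with d ∣ j, f j := by
        simp_rw [sum_smul, smul_sum]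
        exact sum_comm' fun j d => by simp only [mem_filter]; tauto
    _ = _ := by
        refine sum_congr rfl fun d hd => ?_
        rw [Finset.sum_range_filter_dvd (Nat.dvd_of_mem_divisors hd)]

theorem sum_range_exp_eq_ite {n : ℕ} (hn : n ≠ 0) (a : ℤ) :
    ∑ j ∈ range n, exp (2 * π * I * j * a / n) = if (n : ℤ) ∣ a then (n : ℂ) else 0 := by
  have hζ := isPrimitiveRoot_exp n hn
  have hterm (j : ℕ) : exp (2 * π * I * j * a / n) = (exp (2 * π * I / n) ^ a) ^ j := by
    rw [← zpow_natCast, ← zpow_mul, ← exp_int_mul]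
    congr 1
    push_cast
    ring
  simp_rw [hterm]
  split_ifs with hdvd
  · simp [(hζ.zpow_eq_one_iff_dvd a).2 hdvd]
  · have hz1 : exp (2 * π * I / n) ^ a ≠ 1 := fun h => hdvd ((hζ.zpow_eq_one_iff_dvd a).1 h)
    rw [geom_sum_eq hz1, ← zpow_natCast, ← zpow_mul, mul_comm a, zpow_mul, zpow_natCast,
      hζ.pow_eq_one, one_zpow, sub_self, zero_div]

theorem ramanujanSum_eq_sum_divisors_filter_dvd (q : ℕ) (a : ℤ) :
    ramanujanSum q a = ((∑ d ∈ q.divisors with d ∣ a.natAbs, (d : ℤ) * μ (q / d) : ℤ) : ℂ) := by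
  have hinner : ∀ d ∈ q.divisors,
      ∑ k ∈ range (q / d), exp (2 * π * I * ((d * k : ℕ) : ℂ) * a / q)
        = if ((q / d : ℕ) : ℤ) ∣ a then ((q / d : ℕ) : ℂ) else 0 := by
    intro d hd
    obtain ⟨hdq, hq⟩ := Nat.mem_divisors.1 hd
    have hd0 : d ≠ 0 := (Nat.pos_of_mem_divisors hd).ne'
    rw [← sum_range_exp_eq_ite ((Nat.div_ne_zero_iff_of_dvd hdq).2 ⟨hq, hd0⟩)]
    refine sum_congr rfl fun k _ => ?_
    rw [Nat.cast_div hdq (Nat.cast_ne_zero.2 hd0)]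
    push_cast
    field_simp
  rw [ramanujanSum, sum_filter_coprime_eq_sum_moebius_smul,
    sum_congr rfl fun d hd => by rw [hinner d hd], ← Nat.sum_div_divisors, sum_filter]
  simp_rw [Int.natCast_dvd]
  push_cast
  refine sum_congr rfl fun d hd => ?_
  rw [Nat.div_div_self (Nat.dvd_of_mem_divisors hd) (Nat.ne_zero_of_mem_divisors hd)]
  split_ifs <;> simp [mul_comm]

theorem Int.sum_Icc_neg_abs (M : ℕ) : ∑ m ∈ Icc (-(M : ℤ)) M, |m| = M * (M + 1) := by
  induction M with
  | zero => simp
  | succ M ih =>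
    have hIcc : Icc (-((M + 1 : ℕ) : ℤ)) (M + 1 : ℕ)
        = insert (-((M : ℤ) + 1)) (insert ((M : ℤ) + 1) (Icc (-(M : ℤ)) M)) := by
      ext x; simp only [mem_Icc, mem_insert]; omega
    rw [hIcc, sum_insert (by simp only [mem_insert, mem_Icc]; omega),
      sum_insert (by simp only [mem_Icc]; omega), ih, abs_neg, abs_of_nonneg (by positivity)]
    push_cast
    ring

theorem Int.Icc_neg_filter_dvd_eq {N d : ℤ} (hd : 0 < d) :
    {a ∈ Icc (-N) N | d ∣ a}
      = (Icc (-(N / d)) (N / d)).map ⟨(d * ·), mul_right_injective₀ hd.ne'⟩ := by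
  have habs (m : ℤ) : |d * m| ≤ N ↔ |m| ≤ N / d := by
    rw [Int.le_ediv_iff_mul_le hd, abs_mul, abs_of_pos hd, mul_comm]
  ext a
  simp only [mem_filter, mem_map, Function.Embedding.coeFn_mk, mem_Icc, ← abs_le]
  constructor
  · rintro ⟨ha, m, rfl⟩
    exact ⟨m, (habs m).1 ha, rfl⟩
  · rintro ⟨m, hm, rfl⟩
    exact ⟨(habs m).2 hm, dvd_mul_right d m⟩

theorem sum_Icc_filter_dvd_max_sub_abs (h d : ℕ) (hd : 0 < d) :
    ∑ a ∈ Icc (-(h : ℤ)) h with (d : ℤ) ∣ a, max ((h : ℝ) - |(a : ℝ)|) 0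
      = (h : ℝ) ^ 2 / d + d * Int.fract ((h : ℝ) / d) * (1 - Int.fract ((h : ℝ) / d)) := by
  set M := h / d with hM
  have hhM : (d : ℝ) * M + (h % d : ℕ) = h := by exact_mod_cast Nat.div_add_mod h d
  rw [Int.Icc_neg_filter_dvd_eq (Nat.cast_pos.2 hd), sum_map, ← Int.natCast_div, ← hM]
  calc ∑ m ∈ Icc (-(M : ℤ)) M, max ((h : ℝ) - |((d * m : ℤ) : ℝ)|) 0
      = ∑ m ∈ Icc (-(M : ℤ)) M, ((h : ℝ) - d * |(m : ℝ)|) := by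
        refine sum_congr rfl fun m hm => ?_
        have hmM : |(m : ℝ)| ≤ M := by exact_mod_cast abs_le.2 (mem_Icc.1 hm)
        have hdm : (d : ℝ) * |(m : ℝ)| ≤ h :=
          calc (d : ℝ) * |(m : ℝ)| ≤ d * M := by gcongr
            _ ≤ h := hhM ▸ le_add_of_nonneg_right (Nat.cast_nonneg _)
        rw [Int.cast_mul, abs_mul, Int.cast_natCast, Nat.abs_cast, max_eq_left (by linarith)]
    _ = (2 * M + 1) * h - d * M * (M + 1) := by
        rw [sum_sub_distrib, sum_const, Int.card_Icc, ← mul_sum]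
        have hcard : ((M : ℤ) + 1 - -M).toNat = 2 * M + 1 := by omega
        have habs : ∑ m ∈ Icc (-(M : ℤ)) M, |(m : ℝ)| = M * (M + 1) := by
          exact_mod_cast Int.sum_Icc_neg_abs M
        rw [hcard, habs, nsmul_eq_mul]
        push_cast
        ring
    _ = _ := by
        rw [Int.fract_div_natCast_eq_div_natCast_mod, ← hhM]
        field_simp
        ring

theorem sum_mul_ramanujanSum (q : ℕ) (s : Finset ℤ) (g : ℤ → ℂ) :
    ∑ a ∈ s, g a * ramanujanSum q a
      = ∑ d ∈ q.divisors, (d * μ (q / d) : ℂ) * ∑ a ∈ s with (d : ℤ) ∣ a, g a := by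
  simp_rw [ramanujanSum_eq_sum_divisors_filter_dvd, Int.cast_sum, Int.cast_mul, Int.cast_natCast,
    mul_sum, sum_filter, ← Int.natCast_dvd]
  rw [sum_comm]
  simp only [mul_comm (g _)]

theorem fejer_sum_ramanujan_general (q h : ℕ) :
    (∑ a ∈ Finset.Icc (-(h : ℤ)) (h : ℤ),
        ((max ((h : ℝ) - |(a : ℝ)|) 0 : ℝ) : ℂ) * ramanujanSum q a)
      = ((if q = 1 then ((h : ℝ) ^ 2) else 0)
          + ∑ d ∈ q.divisors, (d : ℝ) ^ 2 * (ArithmeticFunction.moebius (q / d) : ℝ)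
              * Int.fract ((h : ℝ) / d) * (1 - Int.fract ((h : ℝ) / d)) : ℝ) := by
  have hterm : ∀ d ∈ q.divisors, (d : ℝ) * μ (q / d) *
      ∑ a ∈ Icc (-(h : ℤ)) h with (d : ℤ) ∣ a, max ((h : ℝ) - |(a : ℝ)|) 0
      = h ^ 2 * μ (q / d)
        + d ^ 2 * μ (q / d) * Int.fract ((h : ℝ) / d) * (1 - Int.fract ((h : ℝ) / d)) := by
    intro d hd
    have hd0 : (d : ℝ) ≠ 0 := Nat.cast_ne_zero.2 (Nat.pos_of_mem_divisors hd).ne'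
    rw [sum_Icc_filter_dvd_max_sub_abs h d (Nat.pos_of_mem_divisors hd)]
    field_simp
  have hmoebius : ∑ d ∈ q.divisors, (μ (q / d) : ℝ) = if q = 1 then 1 else 0 := by
    rw [Nat.sum_div_divisors q (fun d => (μ d : ℝ))]
    exact_mod_cast sum_divisors_moebius q
  rw [sum_mul_ramanujanSum]
  calc _ = ((∑ d ∈ q.divisors, (d : ℝ) * μ (q / d) *
        ∑ a ∈ Icc (-(h : ℤ)) h with (d : ℤ) ∣ a, max ((h : ℝ) - |(a : ℝ)|) 0 : ℝ) : ℂ) := by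
        push_cast
        rfl
    _ = _ := by
        rw [sum_congr rfl hterm, sum_add_distrib, ← mul_sum, hmoebius]
        simp

/-- `Σ_a max(h-|a|,0)·c_q(a) = [q=1]·h² + Σ_{d|q} d²·μ(q/d)·{h/d}·(1-{h/d})`. -/
theorem fejer_sum_ramanujan (q h : ℕ) (hq : 0 < q) (hh : 0 < h) :
    (∑ a ∈ Finset.Icc (-(h : ℤ)) (h : ℤ),
        ((max ((h : ℝ) - |(a : ℝ)|) 0 : ℝ) : ℂ) * ramanujanSum q a)
      = ((if q = 1 then ((h : ℝ) ^ 2) else 0)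
          + ∑ d ∈ q.divisors, (d : ℝ) ^ 2 * (ArithmeticFunction.moebius (q / d) : ℝ)
              * Int.fract ((h : ℝ) / d) * (1 - Int.fract ((h : ℝ) / d)) : ℝ) :=
  fejer_sum_ramanujan_general q h
end

section
/- For any positive integers h and q, Σ_{a ∈ ℤ} max(h-|a|,0)·c_q(a) ≤ h² + σ₂(q), where σ₂(q) = Σ_{d|q} d² and c_q is the Ramanujan sum; moreover if q > 1 it is at most σ₂(q). -/
/-! Write `c_q(a) = Σ_{(j,q)=1} ζ_j^a` with `ζ_j = e^{2πij/q}`. The Fejér kernel identity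
`Σ_a max(h-|a|,0) z^a = |Σ_{n<h} z^n|²` for `|z| = 1` turns the sum into
`Σ_j |Σ_{n<h} ζ_j^n|²`, which is `h²` when `q = 1`. For `0 < j < q` the geometric sum is at most
`2 / |ζ_j - 1| = 1 / |sin(πj/q)|`, and Jordan's inequality `sin x ≥ 2x/π`, applied to the
smaller of `j` and `q - j`, bounds its square by `q²/4 · (1/j² + 1/(q-j)²)`. As
`Σ_{j≥1} 1/j² ≤ 2`, the sum over `j` is then at most `q² ≤ σ₂(q)`. -/

open Finset

open Real

lemma card_filter_sub_eq (h : ℕ) (a : ℤ) :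
    #{p ∈ range h ×ˢ range h | (p.1 : ℤ) - p.2 = a} = h - a.natAbs := by
  rw [← card_range (h - a.natAbs)]
  refine card_bij' (fun p _ => p.1 - a.toNat) (fun i _ => (i + a.toNat, i + (-a).toNat))
    ?_ ?_ ?_ ?_
  · intro p hp
    simp only [mem_filter, mem_product, mem_range] at hp ⊢
    omega
  · intro i hi
    simp only [mem_filter, mem_product, mem_range] at hi ⊢
    omega
  · intro p hp
    simp only [mem_filter, mem_product, mem_range] at hp
    ext <;> simp only <;> omega
  · intro i _
    simp

lemma sum_fejer_mul_zpow {z : ℂ} (hz : ‖z‖ = 1) (h : ℕ) :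
    ∑ a ∈ Icc (-(h : ℤ)) h, ((max ((h : ℝ) - |(a : ℝ)|) 0 : ℝ) : ℂ) * z ^ a
      = ((‖∑ n ∈ range h, z ^ n‖ ^ 2 : ℝ) : ℂ) := by
  have hz0 : z ≠ 0 := norm_ne_zero_iff.mp (by rw [hz]; exact one_ne_zero)
  have hweight : ∀ a ∈ Icc (-(h : ℤ)) h, ((max ((h : ℝ) - |(a : ℝ)|) 0 : ℝ) : ℂ)
      = #{p ∈ range h ×ˢ range h | (p.1 : ℤ) - p.2 = a} := by
    intro a ha
    rw [mem_Icc] at ha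
    rw [card_filter_sub_eq, max_eq_left, Nat.cast_sub (by omega)]
    · rw [← Int.cast_abs, Nat.cast_natAbs, Complex.ofReal_sub, Complex.ofReal_natCast,
        Complex.ofReal_intCast]
    · rw [sub_nonneg, ← Int.cast_abs, ← Int.cast_natCast, Int.cast_le]
      exact abs_le.mpr ha
  calc ∑ a ∈ Icc (-(h : ℤ)) h, ((max ((h : ℝ) - |(a : ℝ)|) 0 : ℝ) : ℂ) * z ^ a
      = ∑ p ∈ range h ×ˢ range h, z ^ ((p.1 : ℤ) - p.2) := by
        rw [← sum_fiberwise_of_maps_to (g := fun p : ℕ × ℕ => (p.1 : ℤ) - p.2)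
          (t := Icc (-(h : ℤ)) h)]
        · refine sum_congr rfl fun a ha => ?_
          rw [hweight a ha, sum_congr rfl fun p hp => by rw [(mem_filter.mp hp).2], sum_const,
            nsmul_eq_mul]
        · intro p hp
          simp only [mem_product, mem_range, mem_Icc] at hp ⊢
          omega
    _ = (∑ n ∈ range h, z ^ n) * starRingEnd ℂ (∑ n ∈ range h, z ^ n) := by
        rw [map_sum, sum_mul_sum, sum_product]
        refine sum_congr rfl fun n _ => sum_congr rfl fun m _ => ?_
        rw [map_pow, ← Complex.inv_eq_conj hz, zpow_sub₀ hz0, zpow_natCast, zpow_natCast,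
          div_eq_mul_inv, inv_pow]
    _ = ((‖∑ n ∈ range h, z ^ n‖ ^ 2 : ℝ) : ℂ) := by
        rw [Complex.mul_conj']
        push_cast
        rfl

lemma ramanujanSum_eq_sum_zpow (q : ℕ) (a : ℤ) :
    ramanujanSum q a = ∑ j ∈ range q with j.Coprime q,
      Complex.exp (2 * π * Complex.I * j / q) ^ a := by
  refine sum_congr rfl fun j _ => ?_
  rw [← Complex.exp_int_mul]
  ring_nf

lemma re_sum_fejer_mul_ramanujanSum (h q : ℕ) :
    (∑ a ∈ Icc (-(h : ℤ)) h, ((max ((h : ℝ) - |(a : ℝ)|) 0 : ℝ) : ℂ) * ramanujanSum q a).re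
      = ∑ j ∈ range q with j.Coprime q,
          ‖∑ n ∈ range h, Complex.exp (2 * π * Complex.I * j / q) ^ n‖ ^ 2 := by
  simp_rw [ramanujanSum_eq_sum_zpow, mul_sum]
  rw [sum_comm, Complex.re_sum]
  refine sum_congr rfl fun j _ => ?_
  have hnorm : ‖Complex.exp (2 * π * Complex.I * j / q)‖ = 1 := by
    rw [Complex.norm_exp]
    simp
  rw [sum_fejer_mul_zpow hnorm, Complex.ofReal_re]

lemma norm_geom_sum_le {z : ℂ} (hz : ‖z‖ = 1) (hz1 : z ≠ 1) (h : ℕ) :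
    ‖∑ n ∈ range h, z ^ n‖ ≤ 2 / ‖z - 1‖ := by
  rw [geom_sum_eq hz1, norm_div]
  gcongr
  calc ‖z ^ h - 1‖ ≤ ‖z ^ h‖ + ‖(1 : ℂ)‖ := norm_sub_le _ _
    _ = 2 := by rw [norm_pow, hz, one_pow, norm_one]; norm_num

lemma norm_exp_two_pi_I_mul_sub_one (x : ℝ) :
    ‖Complex.exp (2 * π * Complex.I * x) - 1‖ = 2 * |sin (π * x)| := by
  have := Complex.norm_exp_I_mul_ofReal_sub_one (2 * π * x)
  push_cast at this
  rw [show 2 * (π : ℂ) * Complex.I * x = Complex.I * (2 * π * x) by ring, this, norm_mul,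
    Real.norm_eq_abs, Real.norm_eq_abs, abs_two]
  ring_nf

lemma inv_sin_sq_le_of_two_mul_le {j q : ℕ} (hj : 0 < j) (hjq : 2 * j ≤ q) :
    (sin (π * (j / q)) ^ 2)⁻¹ ≤ (q : ℝ) ^ 2 / 4 * ((j : ℝ) ^ 2)⁻¹ := by
  have hq : (0 : ℝ) < q := by exact_mod_cast (show 0 < q by omega)
  have hhalf : (j : ℝ) / q ≤ 1 / 2 := by
    rw [div_le_iff₀ hq]
    have : (2 * j : ℝ) ≤ q := by exact_mod_cast hjq
    linarith
  have hjordan : 2 / π * (π * (j / q)) ≤ sin (π * (j / q)) :=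
    mul_le_sin (by positivity) (by nlinarith [pi_pos])
  rw [show 2 / π * (π * (j / q)) = 2 * j / q by field_simp] at hjordan
  have hsin : 0 < sin (π * (j / q)) := lt_of_lt_of_le (by positivity) hjordan
  calc (sin (π * (j / q)) ^ 2)⁻¹ = (sin (π * (j / q)))⁻¹ ^ 2 := (inv_pow _ _).symm
    _ ≤ ((2 * j / q : ℝ)⁻¹) ^ 2 :=
        pow_le_pow_left₀ (inv_nonneg.mpr hsin.le) (inv_anti₀ (by positivity) hjordan) 2
    _ = (q : ℝ) ^ 2 / 4 * ((j : ℝ) ^ 2)⁻¹ := by field_simp; ring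

lemma inv_sin_sq_pi_mul_div_le {j q : ℕ} (hj : 0 < j) (hjq : j < q) :
    (sin (π * (j / q)) ^ 2)⁻¹
      ≤ (q : ℝ) ^ 2 / 4 * (((j : ℝ) ^ 2)⁻¹ + (((q - j : ℕ) : ℝ) ^ 2)⁻¹) := by
  have hreflect : sin (π * ((q - j : ℕ) / q)) = sin (π * (j / q)) := by
    have hq : (q : ℝ) ≠ 0 := by exact_mod_cast (by omega : q ≠ 0)
    rw [Nat.cast_sub hjq.le, sub_div, div_self hq, mul_sub, mul_one, sin_pi_sub]
  rcases le_total (2 * j) q with hle | hle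
  · have := inv_sin_sq_le_of_two_mul_le hj hle
    have : (0 : ℝ) ≤ (q : ℝ) ^ 2 / 4 * (((q - j : ℕ) : ℝ) ^ 2)⁻¹ := by positivity
    linarith
  · have := inv_sin_sq_le_of_two_mul_le (j := q - j) (q := q) (by omega) (by omega)
    rw [hreflect] at this
    have : (0 : ℝ) ≤ (q : ℝ) ^ 2 / 4 * ((j : ℝ) ^ 2)⁻¹ := by positivity
    linarith

lemma norm_geom_sum_exp_sq_le {j q : ℕ} (hj : 0 < j) (hjq : j < q) (h : ℕ) :
    ‖∑ n ∈ range h, Complex.exp (2 * π * Complex.I * j / q) ^ n‖ ^ 2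
      ≤ (q : ℝ) ^ 2 / 4 * (((j : ℝ) ^ 2)⁻¹ + (((q - j : ℕ) : ℝ) ^ 2)⁻¹) := by
  have hq : (0 : ℝ) < q := by exact_mod_cast hj.trans hjq
  have hsin : 0 < sin (π * (j / q)) := by
    refine sin_pos_of_pos_of_lt_pi (by positivity) ?_
    rw [mul_lt_iff_lt_one_right pi_pos, div_lt_one hq]
    exact_mod_cast hjq
  rw [show 2 * π * Complex.I * j / q = 2 * π * Complex.I * ((j / q : ℝ) : ℂ) by push_cast; ring]
  have hdist := norm_exp_two_pi_I_mul_sub_one (j / q)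
  rw [abs_of_pos hsin] at hdist
  have hz1 : Complex.exp (2 * π * Complex.I * ((j / q : ℝ) : ℂ)) ≠ 1 := by
    intro h1
    rw [h1, sub_self, norm_zero] at hdist
    linarith
  have hgeom := norm_geom_sum_le (by rw [Complex.norm_exp]; simp) hz1 h
  rw [hdist, div_mul_cancel_left₀ two_ne_zero] at hgeom
  calc _ ≤ ((sin (π * (j / q)))⁻¹) ^ 2 := pow_le_pow_left₀ (norm_nonneg _) hgeom 2
    _ ≤ _ := by rw [inv_pow]; exact inv_sin_sq_pi_mul_div_le hj hjq

lemma filter_coprime_range_subset_Ioo {q : ℕ} (hq : 1 < q) :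
    {j ∈ range q | j.Coprime q} ⊆ Ioo 0 q := by
  intro j hj
  rw [mem_filter, mem_range] at hj
  refine mem_Ioo.mpr ⟨Nat.pos_of_ne_zero ?_, hj.1⟩
  rintro rfl
  rw [Nat.coprime_zero_left] at hj
  omega

lemma sum_Ioo_norm_geom_sum_exp_sq_le (h q : ℕ) :
    ∑ j ∈ Ioo 0 q, ‖∑ n ∈ range h, Complex.exp (2 * π * Complex.I * j / q) ^ n‖ ^ 2
      ≤ (q : ℝ) ^ 2 := by
  have hreflect :
      ∑ j ∈ Ioo 0 q, (((q - j : ℕ) : ℝ) ^ 2)⁻¹ = ∑ j ∈ Ioo 0 q, ((j : ℝ) ^ 2)⁻¹ := by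
    rw [← Ico_add_one_left_eq_Ioo, zero_add,
      sum_Ico_reflect (fun j => ((j : ℝ) ^ 2)⁻¹) 1 (Nat.le_succ q),
      Nat.add_sub_cancel_left, Nat.add_sub_cancel]
  calc _ ≤ ∑ j ∈ Ioo 0 q, (q : ℝ) ^ 2 / 4 * (((j : ℝ) ^ 2)⁻¹ + (((q - j : ℕ) : ℝ) ^ 2)⁻¹) :=
        sum_le_sum fun j hj => norm_geom_sum_exp_sq_le (mem_Ioo.mp hj).1 (mem_Ioo.mp hj).2 h
    _ = (q : ℝ) ^ 2 / 2 * ∑ j ∈ Ioo 0 q, ((j : ℝ) ^ 2)⁻¹ := by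
        rw [← mul_sum, sum_add_distrib, hreflect]
        ring
    _ ≤ (q : ℝ) ^ 2 / 2 * 2 := by
        gcongr
        simpa using sum_Ioo_inv_sq_le (α := ℝ) 0 q
    _ = (q : ℝ) ^ 2 := by ring

theorem fejer_sum_ramanujan_le_general (h q : ℕ) :
    ((∑ a ∈ Finset.Icc (-(h : ℤ)) (h : ℤ),
        ((max ((h : ℝ) - |(a : ℝ)|) 0 : ℝ) : ℂ) * ramanujanSum q a).re
      ≤ (h : ℝ) ^ 2 + ∑ d ∈ q.divisors, (d : ℝ) ^ 2)
    ∧ (1 < q →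
        (∑ a ∈ Finset.Icc (-(h : ℤ)) (h : ℤ),
          ((max ((h : ℝ) - |(a : ℝ)|) 0 : ℝ) : ℂ) * ramanujanSum q a).re
          ≤ ∑ d ∈ q.divisors, (d : ℝ) ^ 2) := by
  rw [re_sum_fejer_mul_ramanujanSum]
  have hle_σ : 1 < q → ∑ j ∈ range q with j.Coprime q,
      ‖∑ n ∈ range h, Complex.exp (2 * π * Complex.I * j / q) ^ n‖ ^ 2
        ≤ ∑ d ∈ q.divisors, (d : ℝ) ^ 2 := by
    intro hq
    calc _ ≤ _ := sum_le_sum_of_subset_of_nonneg (filter_coprime_range_subset_Ioo hq)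
          fun _ _ _ => by positivity
      _ ≤ (q : ℝ) ^ 2 := sum_Ioo_norm_geom_sum_exp_sq_le h q
      _ ≤ _ := single_le_sum (f := fun d : ℕ => (d : ℝ) ^ 2) (fun _ _ => by positivity)
          (Nat.mem_divisors_self q (by omega))
  refine ⟨?_, hle_σ⟩
  rcases Nat.lt_trichotomy q 1 with hq | rfl | hq
  · obtain rfl : q = 0 := by omega
    simp only [range_zero, filter_empty, sum_empty]
    positivity
  · simp
  · linarith [hle_σ hq, sq_nonneg (h : ℝ)]

/-- `Σ_a max(h-|a|,0)·c_q(a) ≤ h² + σ₂(q)`, and for `q > 1` it is at most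
`σ₂(q)`, where `σ₂(q) = Σ_{d|q} d²`. -/
theorem fejer_sum_ramanujan_le (h q : ℕ) (hh : 0 < h) (hq : 0 < q) :
    ((∑ a ∈ Finset.Icc (-(h : ℤ)) (h : ℤ),
        ((max ((h : ℝ) - |(a : ℝ)|) 0 : ℝ) : ℂ) * ramanujanSum q a).re
      ≤ (h : ℝ) ^ 2 + ∑ d ∈ q.divisors, (d : ℝ) ^ 2)
    ∧ (1 < q →
        (∑ a ∈ Finset.Icc (-(h : ℤ)) (h : ℤ),
          ((max ((h : ℝ) - |(a : ℝ)|) 0 : ℝ) : ℂ) * ramanujanSum q a).re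
          ≤ ∑ d ∈ q.divisors, (d : ℝ) ^ 2) :=
  fejer_sum_ramanujan_le_general h q
end
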